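/- arXiv:2107.13206 — 5 statements merged into one kernel-verified Lean document; each statement's English description precedes it below -/
import Mathlib

section
/- For any finite sets A, B, C of integers with C nonempty, |A - B| ≤ |A - C| · |C - B| / |C|, i.e., |A - B| · |C| ≤ |A - C| · |C - B|. -/
open Pointwise

/-- Ruzsa's triangle inequality: for finite sets of integers `A`, `B`, `C` with `C` nonempty,
`|A - B| · |C| ≤ |A - C| · |C - B|`. -/
theorem ruzsa_triangle_inequality (A B C : Finset ℤ) (hC : C.Nonempty) :
    (A - B).card * C.card ≤ (A - C).card * (C - B).card := by
  have h := Finset.ruzsa_triangle_inequality_sub_sub_sub A C B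
  have : (B - C).card = (C - B).card := by
    rw [← Finset.card_neg (B - C)]; congr 1; ext x
    simp [Finset.mem_neg, Finset.mem_sub]
  rw [← this]; exact h
end

section
/- Let A, B be finite sets of integers and ℓ ≤ u integers. Define S^(0) = (A + B) ∩ [ℓ, u] and S^(1) = ((A div 2) + (B div 2)) ∩ [⌊ℓ/2⌋, ⌊u/2⌋]. Then S^(0) ⊆ {2s, 2s+1, 2s+2 : s ∈ S^(1)} ∪ {ℓ, ℓ+1, u}. -/
open Pointwise

/-- With `S^(0) = (A + B) ∩ [ℓ, u]` and `S^(1) = ((A div 2) + (B div 2)) ∩ [⌊ℓ/2⌋, ⌊u/2⌋]`,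
we have `S^(0) ⊆ (2·S^(1) + {0,1,2}) ∪ {ℓ, ℓ+1, u}`. -/
theorem restricted_sumset_subset_halved (A B : Finset ℤ) (ℓ u : ℤ) (hℓu : ℓ ≤ u) :
    (A + B) ∩ Finset.Icc ℓ u ⊆
      ((((A.image (fun a => a / 2)) + (B.image (fun b => b / 2))) ∩
          Finset.Icc (ℓ / 2) (u / 2)).image (fun s => 2 * s) + ({0, 1, 2} : Finset ℤ)) ∪
        {ℓ, ℓ + 1, u} := by
  intro x hx
  simp only [Finset.mem_inter, Finset.mem_add, Finset.mem_Icc] at hx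
  obtain ⟨⟨a, ha, b, hb, rfl⟩, hl, hu⟩ := hx
  rcases lt_or_ge (a + b) (ℓ + 2) with h | h
  · refine Finset.mem_union.2 (Or.inr ?_)
    simp only [Finset.mem_insert, Finset.mem_singleton]
    omega
  · refine Finset.mem_union.2 (Or.inl ?_)
    refine Finset.mem_add.2 ⟨2 * (a / 2 + b / 2), ?_, a + b - 2 * (a / 2 + b / 2), ?_, by ring⟩
    · refine Finset.mem_image.2 ⟨a / 2 + b / 2, ?_, rfl⟩
      simp only [Finset.mem_inter, Finset.mem_add, Finset.mem_Icc, Finset.mem_image]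
      exact ⟨⟨a / 2, ⟨a, ha, rfl⟩, b / 2, ⟨b, hb, rfl⟩, rfl⟩, by omega, by omega⟩
    · simp only [Finset.mem_insert, Finset.mem_singleton]
      omega
end

section
/- Let Z ⊆ [1, u] be a finite set of positive integers partitioned into Z = Z1 ∪ Z2 (disjoint), with max(Z) ≤ μu where μ ≤ 1/16, and let 0 ≤ ε ≤ 1/4. Then |S(Z1, (1+ε)u/2)| + |S(Z2, (1+ε)u/2)| ≤ (|S(Z, u)| + 1) / (1 − 2ε − 4μ). -/
/-- `subsetSums X t` is the set of all subset sums of `X` (including the empty sum `0`)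
that are at most the real bound `t`. -/
noncomputable def subsetSums (X : Finset ℕ) (t : ℝ) : Finset ℕ :=
  (X.powerset.image fun I => ∑ x ∈ I, x).filter fun s => (s : ℝ) ≤ t

/-!
Write `A = S(Z₁, t)`, `B = S(Z₂, t)`, `C = S(Z, u)` with `t = (1 + ε) u / 2`, and `w = max Z`.
Since `A ∪ B ⊆ C`, only `A ∩ B` is counted twice. If every `a + b` (`a ∈ A`, `b ∈ B`) is at most
`u`, then `A + B ⊆ C` and Cauchy–Davenport gives `|A| + |B| ≤ |C| + 1`. Otherwise cut `[0, t]`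
into `K` windows of length `t / K > 2t + 2w - u` and pick a window `(a, c]` holding at most
`|A ∩ B| / K` common sums. Common sums above `c` are shifted, by a subset sum of `Z₂` within `w`
below `t + w - c`, into `C ∩ (t, 2t + w - c]`; common sums at most `a` are sent into
`C ∩ (2t + w - c, u]`, either by adding a subset sum of `Z₂` close to `u - a` or by complementing
in `Z₁` and adding one close to `u - σ(Z₁)`. Hence `|A| + |B| ≤ |C| + (|A| + |B|) / (2K)`, and `K`
can be taken with `1 / (2K) ≤ 2ε + 4μ` (when `2ε + 4μ ≥ 1/2`, `A, B ⊆ C` already suffices).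
-/

open Finset

section SubsetSums

variable {X Y : Finset ℕ} {s : ℕ} {t t' : ℝ}

theorem mem_subsetSums : s ∈ subsetSums X t ↔ (∃ I ⊆ X, ∑ x ∈ I, x = s) ∧ (s : ℝ) ≤ t := by
  simp [subsetSums]

theorem sum_mem_subsetSums {I : Finset ℕ} (hI : I ⊆ X) (h : ((∑ x ∈ I, x : ℕ) : ℝ) ≤ t) :
    ∑ x ∈ I, x ∈ subsetSums X t :=
  mem_subsetSums.2 ⟨⟨I, hI, rfl⟩, h⟩

theorem le_of_mem_subsetSums (h : s ∈ subsetSums X t) : (s : ℝ) ≤ t :=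
  (mem_subsetSums.1 h).2

theorem le_sum_of_mem_subsetSums (h : s ∈ subsetSums X t) : s ≤ ∑ x ∈ X, x := by
  obtain ⟨⟨I, hI, rfl⟩, -⟩ := mem_subsetSums.1 h
  exact sum_le_sum_of_subset hI

theorem zero_mem_subsetSums (ht : 0 ≤ t) : 0 ∈ subsetSums X t :=
  mem_subsetSums.2 ⟨⟨∅, empty_subset X, sum_empty⟩, by simpa using ht⟩

theorem subsetSums_mono (hXY : X ⊆ Y) (ht : t ≤ t') : subsetSums X t ⊆ subsetSums Y t' := by
  intro s hs
  obtain ⟨⟨I, hI, rfl⟩, hst⟩ := mem_subsetSums.1 hs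
  exact sum_mem_subsetSums (hI.trans hXY) (hst.trans ht)

theorem add_mem_subsetSums_union (hXY : Disjoint X Y) {a b : ℕ} (ha : a ∈ subsetSums X t)
    (hb : b ∈ subsetSums Y t') : a + b ∈ subsetSums (X ∪ Y) (t + t') := by
  obtain ⟨⟨I, hI, rfl⟩, hIt⟩ := mem_subsetSums.1 ha
  obtain ⟨⟨J, hJ, rfl⟩, hJt⟩ := mem_subsetSums.1 hb
  have hIJ := sum_union (f := fun x => x) (hXY.mono hI hJ)
  rw [← hIJ]
  exact sum_mem_subsetSums (union_subset_union hI hJ) (by rw [hIJ, Nat.cast_add]; linarith)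

theorem sum_sub_mem_subsetSums (h : s ∈ subsetSums X t) :
    ∑ x ∈ X, x - s ∈ subsetSums X (∑ x ∈ X, x : ℕ) := by
  obtain ⟨⟨I, hI, rfl⟩, -⟩ := mem_subsetSums.1 h
  rw [← Nat.eq_sub_of_add_eq (sum_sdiff hI)]
  exact sum_mem_subsetSums sdiff_subset (by exact_mod_cast sum_le_sum_of_subset sdiff_subset)

theorem subsetSums_eq_filter (htt' : t ≤ t') :
    subsetSums X t = {s ∈ subsetSums X t' | ((s : ℕ) : ℝ) ≤ t} := by
  ext s
  simp only [mem_filter, mem_subsetSums]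
  constructor
  · rintro ⟨hI, hs⟩
    exact ⟨⟨hI, hs.trans htt'⟩, hs⟩
  · rintro ⟨⟨hI, -⟩, hs⟩
    exact ⟨hI, hs⟩

theorem card_subsetSums_add_card_filter_lt (htt' : t ≤ t') :
    #(subsetSums X t) + #{s ∈ subsetSums X t' | t < (s : ℕ)} = #(subsetSums X t') := by
  simpa only [← subsetSums_eq_filter htt', not_le] using
    card_filter_add_card_filter_not (s := subsetSums X t') fun s : ℕ => (s : ℝ) ≤ t

theorem exists_mem_subsetSums_sub_le {w : ℕ} (hXw : ∀ x ∈ X, x ≤ w) {r : ℝ} (hr : 0 ≤ r)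
    (hrX : r ≤ ∑ x ∈ X, x) : ∃ s ∈ subsetSums X r, r - w ≤ s := by
  induction X using Finset.induction_on generalizing r with
  | empty =>
    exact ⟨0, zero_mem_subsetSums hr, by simp at hrX; linarith⟩
  | insert a X haX ih =>
    rw [forall_mem_insert] at hXw
    rcases le_or_gt (a : ℝ) r with har | hra
    · rw [sum_insert haX, Nat.cast_add] at hrX
      obtain ⟨s, hs, hrs⟩ := ih hXw.2 (r := r - a) (by linarith) (by linarith)
      have ha : a ∈ subsetSums {a} a := by simpa using sum_mem_subsetSums (subset_refl {a}) (t := a)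
      refine ⟨a + s, ?_, by push_cast; linarith⟩
      simpa [← insert_eq] using add_mem_subsetSums_union (disjoint_singleton_left.2 haX) ha hs
    · have : (a : ℝ) ≤ w := by exact_mod_cast hXw.1
      exact ⟨0, zero_mem_subsetSums hr, by simp; linarith⟩

end SubsetSums

theorem card_le_card_filter_le_add_card_filter_Ioc_add_card_filter_lt (D : Finset ℕ)
    (a c : ℝ) : #D ≤ #{x ∈ D | ((x : ℕ) : ℝ) ≤ a} + #{x ∈ D | a < (x : ℕ) ∧ (x : ℕ) ≤ c} +
      #{x ∈ D | c < (x : ℕ)} := by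
  calc #D
    _ ≤ #({x ∈ D | ((x : ℕ) : ℝ) ≤ a} ∪ {x ∈ D | a < (x : ℕ) ∧ (x : ℕ) ≤ c} ∪
        {x ∈ D | c < (x : ℕ)}) := card_le_card fun x hx => ?_
    _ ≤ _ := (card_union_le _ _).trans (Nat.add_le_add_right (card_union_le _ _) _)
  simp only [mem_union, mem_filter, hx, true_and]
  by_cases hxa : (x : ℝ) ≤ a
  · exact Or.inl (Or.inl hxa)
  · by_cases hxc : (x : ℝ) ≤ c
    · exact Or.inl (Or.inr ⟨lt_of_not_ge hxa, hxc⟩)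
    · exact Or.inr (lt_of_not_ge hxc)

theorem exists_card_filter_window_le (D : Finset ℕ) {ℓ : ℝ} (hℓ : 0 < ℓ) {K : ℕ} (hK : 0 < K) :
    ∃ k ∈ Icc 1 K, (#{x ∈ D | (k - 1) * ℓ < (x : ℕ) ∧ (x : ℕ) ≤ k * ℓ} : ℝ) ≤ #D / K := by
  obtain ⟨k, hk, hcard⟩ := exists_card_fiber_le_of_card_le_nsmul (s := D)
    (f := fun x : ℕ => ⌈(x : ℝ) / ℓ⌉₊) (t := Icc 1 K) (b := (#D : ℝ) / K)
    ⟨1, mem_Icc.2 ⟨le_rfl, hK⟩⟩ (by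
      rw [Nat.card_Icc, Nat.add_sub_cancel, nsmul_eq_mul, mul_div_cancel₀]
      exact_mod_cast hK.ne')
  refine ⟨k, hk, le_of_eq_of_le ?_ hcard⟩
  have hk1 := (mem_Icc.1 hk).1
  congr 2
  refine filter_congr fun x _ => ?_
  rw [Nat.ceil_eq_iff (by omega), Nat.cast_sub hk1, lt_div_iff₀ hℓ, div_le_iff₀ hℓ]
  simp

theorem exists_nat_one_div_two_mul_le_and_mul_lt_one {s : ℝ} (hs0 : 0 < s) (hs : s < 1 / 2) :
    ∃ K : ℕ, 0 < K ∧ 1 / (2 * K) ≤ s ∧ K * s < 1 := by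
  refine ⟨⌈1 / (2 * s)⌉₊, Nat.one_le_ceil_iff.2 (by positivity), ?_, ?_⟩
  · have hK := Nat.le_ceil (1 / (2 * s))
    rw [div_le_iff₀ (by positivity)]
    rw [div_le_iff₀ (by positivity)] at hK
    nlinarith
  · have hK := Nat.ceil_lt_add_one (show 0 ≤ 1 / (2 * s) by positivity)
    calc (⌈1 / (2 * s)⌉₊ : ℝ) * s < (1 / (2 * s) + 1) * s := by gcongr
      _ = 1 / 2 + s := by field_simp
      _ < 1 := by linarith

open scoped Pointwise

section Counting

variable {X Y : Finset ℕ}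

theorem card_subsetSums_add_card_subsetSums_le (hXY : Disjoint X Y) {t t' u : ℝ} (ht : 0 ≤ t)
    (ht' : 0 ≤ t') (hfit : ∀ a ∈ subsetSums X t, ∀ b ∈ subsetSums Y t', (a + b : ℝ) ≤ u) :
    #(subsetSums X t) + #(subsetSums Y t') ≤ #(subsetSums (X ∪ Y) u) + 1 := by
  have hsub : subsetSums X t + subsetSums Y t' ⊆ subsetSums (X ∪ Y) u := by
    refine add_subset_iff.2 fun a ha b hb => mem_subsetSums.2 ⟨?_, ?_⟩
    · exact (mem_subsetSums.1 (add_mem_subsetSums_union hXY ha hb)).1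
    · exact_mod_cast hfit a ha b hb
  have := cauchy_davenport_add_of_linearOrder_isCancelAdd
    ⟨0, zero_mem_subsetSums (X := X) ht⟩ ⟨0, zero_mem_subsetSums (X := Y) ht'⟩
  have := card_le_card hsub
  omega

variable {w : ℕ}

theorem card_subsetSums_le_card_filter_ge (hXY : Disjoint X Y) (hYw : ∀ y ∈ Y, y ≤ w)
    {a u : ℝ} (h : (0 ≤ a ∧ a ≤ u ∧ u ≤ a + ∑ y ∈ Y, y) ∨
      ((∑ x ∈ X, x : ℕ) ≤ u ∧ u ≤ ∑ x ∈ X, x + ∑ y ∈ Y, y)) :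
    #(subsetSums X a) ≤ #{s ∈ subsetSums (X ∪ Y) u | u - w - a ≤ (s : ℕ)} := by
  rcases h with ⟨ha, hau, huY⟩ | ⟨hXu, huXY⟩
  · obtain ⟨y, hy, hyr⟩ :=
      exists_mem_subsetSums_sub_le hYw (r := u - a) (by linarith) (by linarith)
    refine card_le_card_of_injOn (· + y) (fun x hx => ?_) fun x _ x' _ h => add_right_cancel h
    have hxy := add_mem_subsetSums_union hXY hx hy
    rw [add_sub_cancel] at hxy
    have hx0 : (0 : ℝ) ≤ x := x.cast_nonneg
    simp only [mem_coe, mem_filter, Nat.cast_add]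
    exact ⟨hxy, by linarith⟩
  · set σ := ∑ x ∈ X, x
    obtain ⟨y, hy, hyr⟩ :=
      exists_mem_subsetSums_sub_le hYw (r := u - σ) (by linarith) (by linarith)
    have hσ {x : ℕ} (hx : x ∈ subsetSums X a) : x ≤ σ := le_sum_of_mem_subsetSums hx
    refine card_le_card_of_injOn (fun x => σ - x + y) (fun x hx => ?_)
      fun x hx x' hx' h => ?_
    · have hxy := add_mem_subsetSums_union hXY (sum_sub_mem_subsetSums hx) hy
      rw [add_sub_cancel] at hxy
      have hxa := le_of_mem_subsetSums hx
      simp only [mem_coe, mem_filter, Nat.cast_add, Nat.cast_sub (hσ hx)]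
      exact ⟨hxy, by linarith⟩
    · have := hσ hx
      have := hσ hx'
      simp only at h
      omega

theorem card_filter_lt_le_card_filter_lt (hXY : Disjoint X Y) (hYw : ∀ y ∈ Y, y ≤ w)
    {c t : ℝ} (hct : c ≤ t + w) (hY : t + w - c ≤ ∑ y ∈ Y, y) :
    #{x ∈ subsetSums X t | c < (x : ℕ)} ≤
      #{s ∈ subsetSums (X ∪ Y) (2 * t + w - c) | t < (s : ℕ)} := by
  obtain ⟨y, hy, hyr⟩ :=
    exists_mem_subsetSums_sub_le hYw (r := t + w - c) (by linarith) hY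
  refine card_le_card_of_injOn (· + y) (fun x hx => ?_) fun x _ x' _ h => add_right_cancel h
  simp only [mem_coe, mem_filter] at hx
  have hxy := add_mem_subsetSums_union hXY hx.1 hy
  simp only [mem_coe, mem_filter, Nat.cast_add]
  exact ⟨by convert hxy using 2; ring, by linarith⟩

theorem card_add_card_le_card_add_card_window (hXY : Disjoint X Y) (hYw : ∀ y ∈ Y, y ≤ w)
    {a c t u : ℝ} (ha : 0 ≤ a) (hac : a ≤ c) (hct : c ≤ t)
    (hwin : 2 * t + 2 * w - u < c - a) (hY : u - t ≤ ∑ y ∈ Y, y)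
    (hσ : u ≤ ∑ x ∈ X, x + ∑ y ∈ Y, y) (horient : (∑ x ∈ X, x : ℕ) ≤ u ∨ u ≤ ∑ y ∈ Y, y) :
    #(subsetSums X t) + #(subsetSums Y t) ≤ #(subsetSums (X ∪ Y) u) +
      #{x ∈ subsetSums X t ∩ subsetSums Y t | a < (x : ℕ) ∧ (x : ℕ) ≤ c} := by
  set D := subsetSums X t ∩ subsetSums Y t
  set m := 2 * t + w - c
  have hw : (0 : ℝ) ≤ w := w.cast_nonneg
  have hunion : subsetSums X t ∪ subsetSums Y t ⊆ subsetSums (X ∪ Y) t :=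
    union_subset (subsetSums_mono subset_union_left le_rfl)
      (subsetSums_mono subset_union_right le_rfl)
  have hD := card_le_card_filter_le_add_card_filter_Ioc_add_card_filter_lt D a c
  have hlow : #{x ∈ D | ((x : ℕ) : ℝ) ≤ a} ≤ #{s ∈ subsetSums (X ∪ Y) u | m < (s : ℕ)} :=
    calc #{x ∈ D | ((x : ℕ) : ℝ) ≤ a}
      _ ≤ #(subsetSums X a) := by
        rw [subsetSums_eq_filter (hac.trans hct)]
        exact card_le_card (filter_subset_filter _ inter_subset_left)
      _ ≤ #{s ∈ subsetSums (X ∪ Y) u | u - w - a ≤ (s : ℕ)} :=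
        card_subsetSums_le_card_filter_ge hXY hYw (by
          rcases horient with h | h
          · exact Or.inr ⟨h, hσ⟩
          · exact Or.inl ⟨ha, by linarith, by linarith⟩)
      _ ≤ _ := card_le_card fun s hs => by
        simp only [mem_filter] at hs ⊢
        exact ⟨hs.1, by linarith⟩
  have hhigh : #{x ∈ D | c < (x : ℕ)} ≤ #{s ∈ subsetSums (X ∪ Y) m | t < (s : ℕ)} :=
    (card_le_card (filter_subset_filter _ inter_subset_left)).trans
      (card_filter_lt_le_card_filter_lt hXY hYw (by linarith) (by linarith))
  have hsplit_t := card_subsetSums_add_card_filter_lt (X := X ∪ Y) (t := t) (t' := m)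
    (by linarith)
  have hsplit_m := card_subsetSums_add_card_filter_lt (X := X ∪ Y) (t := m) (t' := u)
    (by linarith)
  have hinter : #(subsetSums X t ∪ subsetSums Y t) + #D =
      #(subsetSums X t) + #(subsetSums Y t) := card_union_add_card_inter _ _
  have := card_le_card hunion
  omega

theorem card_add_card_mul_le_of_lt_div (hXY : Disjoint X Y) (hYw : ∀ y ∈ Y, y ≤ w) {t u : ℝ}
    {K : ℕ} (hK : 0 < K) (hwin : 2 * t + 2 * w - u < t / K)
    (hab : ∃ a ∈ subsetSums X t, ∃ b ∈ subsetSums Y t, u < (a + b : ℝ))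
    (horient : (∑ x ∈ X, x : ℕ) ≤ u ∨ u ≤ ∑ y ∈ Y, y) :
    (#(subsetSums X t) + #(subsetSums Y t) : ℝ) * (1 - 1 / (2 * K)) ≤
      #(subsetSums (X ∪ Y) u) := by
  set A := subsetSums X t
  set B := subsetSums Y t
  obtain ⟨a, ha, b, hb, hu⟩ := hab
  have hat := le_of_mem_subsetSums ha
  have hbt := le_of_mem_subsetSums hb
  have haX : (a : ℝ) ≤ ∑ x ∈ X, x := by exact_mod_cast le_sum_of_mem_subsetSums ha
  have hbY : (b : ℝ) ≤ ∑ y ∈ Y, y := by exact_mod_cast le_sum_of_mem_subsetSums hb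
  have hKR : (0 : ℝ) < K := by exact_mod_cast hK
  have hw : (0 : ℝ) ≤ w := w.cast_nonneg
  have hℓ : 0 < t / K := by linarith
  obtain ⟨k, hk, hg⟩ := exists_card_filter_window_le (A ∩ B) hℓ hK
  obtain ⟨hk1, hkK⟩ := mem_Icc.1 hk
  have hk1R : (1 : ℝ) ≤ k := by exact_mod_cast hk1
  have hkt : k * (t / K) ≤ t := calc
    (k : ℝ) * (t / K) ≤ K * (t / K) := by gcongr
    _ = t := by field_simp
  have hwindow : (#A + #B : ℝ) ≤ #(subsetSums (X ∪ Y) u) +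
      #{x ∈ A ∩ B | (k - 1) * (t / K) < (x : ℕ) ∧ (x : ℕ) ≤ k * (t / K)} := by
    exact_mod_cast card_add_card_le_card_add_card_window hXY hYw
      (a := (k - 1) * (t / K)) (by positivity) (by nlinarith) hkt
      (by linarith) (by linarith) (by linarith) horient
  have hinter : (2 * #(A ∩ B) : ℝ) ≤ #A + #B := by
    have := card_le_card (inter_subset_left (s₁ := A) (s₂ := B))
    have := card_le_card (inter_subset_right (s₁ := A) (s₂ := B))
    exact_mod_cast (by omega : 2 * #(A ∩ B) ≤ #A + #B)
  have hDK : (#(A ∩ B) : ℝ) / K ≤ (#A + #B) / (2 * K) := by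
    rw [div_le_div_iff₀ hKR (by positivity)]
    nlinarith
  calc (#A + #B : ℝ) * (1 - 1 / (2 * K))
    _ = #A + #B - (#A + #B) / (2 * K) := by ring
    _ ≤ #(subsetSums (X ∪ Y) u) := by linarith

theorem card_add_card_mul_le_of_exists_lt_add (hXY : Disjoint X Y) (hw : ∀ z ∈ X ∪ Y, z ≤ w)
    {s t u : ℝ} (hs0 : 0 < s) (hs : s < 1 / 2) (hst : 2 * t + 2 * w - u ≤ s * t)
    (hab : ∃ a ∈ subsetSums X t, ∃ b ∈ subsetSums Y t, u < (a + b : ℝ)) :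
    (#(subsetSums X t) + #(subsetSums Y t) : ℝ) * (1 - s) ≤ #(subsetSums (X ∪ Y) u) := by
  obtain ⟨K, hK, hKs, hKs1⟩ := exists_nat_one_div_two_mul_le_and_mul_lt_one hs0 hs
  have hwin : 2 * t + 2 * w - u < t / K := by
    obtain ⟨a, ha, b, hb, hu⟩ := hab
    have := le_of_mem_subsetSums ha
    have := le_of_mem_subsetSums hb
    have : (0 : ℝ) ≤ w := w.cast_nonneg
    have ht : 0 < t := by nlinarith
    rw [lt_div_iff₀ (by exact_mod_cast hK)]
    nlinarith
  have hKs' : 1 - s ≤ 1 - 1 / (2 * K) := by linarith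
  refine (mul_le_mul_of_nonneg_left hKs' (by positivity)).trans ?_
  rcases le_or_gt ((∑ x ∈ X, x : ℕ) : ℝ) u with h | h
  · exact card_add_card_mul_le_of_lt_div hXY (fun y hy => hw y (mem_union_right _ hy))
      hK hwin hab (Or.inl h)
  · obtain ⟨a, ha, b, hb, hab⟩ := hab
    have := card_add_card_mul_le_of_lt_div hXY.symm (fun y hy => hw y (mem_union_left _ hy))
      hK hwin ⟨b, hb, a, ha, by linarith⟩ (Or.inr h.le)
    rwa [union_comm, add_comm (#(subsetSums Y t) : ℝ)] at this

end Counting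

theorem subset_sums_splitting_general (u : ℕ) (Z Z1 Z2 : Finset ℕ)
    (hZ : Z ⊆ Finset.Icc 1 u) (hZne : Z.Nonempty)
    (hpart : Z = Z1 ∪ Z2) (hdisj : Disjoint Z1 Z2)
    (μ ε : ℝ) (hμdef : μ = (Z.max' hZne : ℝ) / u) (hμ : μ ≤ 1 / 16)
    (hε0 : 0 ≤ ε) (hε : ε ≤ 1 / 4) :
    ((subsetSums Z1 ((1 + ε) * u / 2)).card + (subsetSums Z2 ((1 + ε) * u / 2)).card : ℝ) ≤
      ((subsetSums Z u).card + 1) / (1 - 2 * ε - 4 * μ) := by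
  subst hpart
  set w := (Z1 ∪ Z2).max' hZne
  set t := (1 + ε) * (u : ℝ) / 2 with ht_def
  have hwZ : ∀ z ∈ Z1 ∪ Z2, z ≤ w := fun z hz => le_max' _ z hz
  obtain ⟨hw1, hwu⟩ := mem_Icc.1 (hZ (max'_mem _ hZne))
  have hu : (0 : ℝ) < u := by exact_mod_cast hw1.trans hwu
  have hwμ : (w : ℝ) = μ * u := by rw [hμdef]; field_simp
  have hμ0 : 0 < μ := by rw [hμdef]; exact div_pos (by exact_mod_cast hw1) hu
  have ht : 0 ≤ t := by positivity
  have htu : t ≤ u := by rw [ht_def]; nlinarith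
  rw [le_div_iff₀ (by linarith)]
  have hAC : (#(subsetSums Z1 t) : ℝ) ≤ #(subsetSums (Z1 ∪ Z2) u) := by
    exact_mod_cast card_le_card (subsetSums_mono subset_union_left htu)
  have hBC : (#(subsetSums Z2 t) : ℝ) ≤ #(subsetSums (Z1 ∪ Z2) u) := by
    exact_mod_cast card_le_card (subsetSums_mono subset_union_right htu)
  rcases le_or_gt (1 - 2 * ε - 4 * μ) (1 / 2) with hsmall | hlarge
  · nlinarith
  by_cases hfit : ∀ a ∈ subsetSums Z1 t, ∀ b ∈ subsetSums Z2 t, (a + b : ℝ) ≤ u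
  · have h : (#(subsetSums Z1 t) + #(subsetSums Z2 t) : ℝ) ≤ #(subsetSums (Z1 ∪ Z2) u) + 1 := by
      exact_mod_cast card_subsetSums_add_card_subsetSums_le hdisj ht ht hfit
    nlinarith
  push Not at hfit
  have := card_add_card_mul_le_of_exists_lt_add hdisj hwZ (s := 2 * ε + 4 * μ) (by positivity)
    (by linarith) (by rw [hwμ, ht_def]; nlinarith [mul_nonneg (mul_nonneg hε0 hε0) hu.le]) hfit
  linarith

/-- Splitting lemma: if `Z ⊆ [1,u]` is partitioned into `Z1 ∪ Z2`, `μ = max(Z)/u ≤ 1/16`,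
and `0 ≤ ε ≤ 1/4`, then
`|S(Z1,(1+ε)u/2)| + |S(Z2,(1+ε)u/2)| ≤ (|S(Z,u)| + 1) / (1 − 2ε − 4μ)`. -/
theorem subset_sums_splitting (u : ℕ) (hu : 0 < u) (Z Z1 Z2 : Finset ℕ)
    (hZ : Z ⊆ Finset.Icc 1 u) (hZne : Z.Nonempty)
    (hpart : Z = Z1 ∪ Z2) (hdisj : Disjoint Z1 Z2)
    (μ ε : ℝ) (hμdef : μ = (Z.max' hZne : ℝ) / u) (hμ : μ ≤ 1 / 16)
    (hε0 : 0 ≤ ε) (hε : ε ≤ 1 / 4) :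
    ((subsetSums Z1 ((1 + ε) * u / 2)).card + (subsetSums Z2 ((1 + ε) * u / 2)).card : ℝ) ≤
      ((subsetSums Z u).card + 1) / (1 - 2 * ε - 4 * μ) :=
  subset_sums_splitting_general u Z Z1 Z2 hZ hZne hpart hdisj μ ε hμdef hμ hε0 hε
end

section
/- Let X be a finite set of positive integers partitioned as X = X1 ∪ X2 ∪ {x_n} where x_n = max(X), and suppose Σ(X1) ≤ Σ(X2). Then |S(X1, Σ(X1))| ≤ (|S(X, Σ(X))| + 1)/2, where S(Y, t) is the set of subset sums of Y that are at most t. -/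
/-!
Adding `Σ(X2)` to the nonzero subset sums of `X1` lands in the subset sums of `X` (realize
`x = Σ(I)` with `I ⊆ X1`, then take `I ∪ X2`), and strictly above `Σ(X1)` because
`Σ(X1) ≤ Σ(X2)`, so outside `S(X1, Σ(X1))`. Hence `S(X, Σ(X))` contains `S(X1, Σ(X1))` together
with `|S(X1, Σ(X1))| - 1` further elements.
-/

/-- `subsetSumsN X t` is the set of all subset sums of `X` (including `0`) that are at most `t`. -/
def subsetSumsN (X : Finset ℕ) (t : ℕ) : Finset ℕ :=
  (X.powerset.image fun I => ∑ x ∈ I, x).filter (· ≤ t)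

open Finset

lemma mem_subsetSumsN {X : Finset ℕ} {t y : ℕ} :
    y ∈ subsetSumsN X t ↔ (∃ I ⊆ X, ∑ x ∈ I, x = y) ∧ y ≤ t := by
  simp [subsetSumsN]

lemma mem_subsetSumsN_sum {X : Finset ℕ} {y : ℕ} :
    y ∈ subsetSumsN X (∑ x ∈ X, x) ↔ ∃ I ⊆ X, ∑ x ∈ I, x = y := by
  rw [mem_subsetSumsN, and_iff_left_iff_imp]
  rintro ⟨I, hI, rfl⟩
  exact sum_le_sum_of_subset hI

lemma zero_mem_subsetSumsN (X : Finset ℕ) (t : ℕ) : 0 ∈ subsetSumsN X t :=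
  mem_subsetSumsN.2 ⟨⟨∅, empty_subset X, sum_empty⟩, Nat.zero_le t⟩

lemma subsetSumsN_sum_mono {X Y : Finset ℕ} (h : X ⊆ Y) :
    subsetSumsN X (∑ x ∈ X, x) ⊆ subsetSumsN Y (∑ y ∈ Y, y) := fun _ hy => by
  obtain ⟨I, hI, rfl⟩ := mem_subsetSumsN_sum.1 hy
  exact mem_subsetSumsN_sum.2 ⟨I, hI.trans h, rfl⟩

lemma image_add_sum_subset_sdiff {X X1 X2 : Finset ℕ} (hX : X1 ∪ X2 ⊆ X) (h12 : Disjoint X1 X2)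
    (hsum : ∑ x ∈ X1, x ≤ ∑ x ∈ X2, x) :
    ((subsetSumsN X1 (∑ x ∈ X1, x)).erase 0).image (· + ∑ x ∈ X2, x) ⊆
      subsetSumsN X (∑ x ∈ X, x) \ subsetSumsN X1 (∑ x ∈ X1, x) := by
  intro _ hy
  obtain ⟨_, hz, rfl⟩ := mem_image.1 hy
  obtain ⟨hz0, hz⟩ := mem_erase.1 hz
  obtain ⟨I, hI, rfl⟩ := mem_subsetSumsN_sum.1 hz
  refine mem_sdiff.2 ⟨mem_subsetSumsN_sum.2 ⟨I ∪ X2, (union_subset_union hI le_rfl).trans hX, ?_⟩,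
    fun hmem => ?_⟩
  · exact sum_union (disjoint_of_subset_left hI h12)
  · have := (mem_subsetSumsN.1 hmem).2
    omega

theorem subset_sums_halving_general (X X1 X2 : Finset ℕ) (xn : ℕ)
    (hX : X = X1 ∪ X2 ∪ {xn}) (h12 : Disjoint X1 X2)
    (hsum : ∑ x ∈ X1, x ≤ ∑ x ∈ X2, x) :
    2 * (subsetSumsN X1 (∑ x ∈ X1, x)).card ≤ (subsetSumsN X (∑ x ∈ X, x)).card + 1 := by
  have hX12 : X1 ∪ X2 ⊆ X := hX ▸ subset_union_left
  have hsub := subsetSumsN_sum_mono (subset_union_left.trans hX12)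
  have hnew := card_le_card (image_add_sum_subset_sdiff hX12 h12 hsum)
  rw [card_image_of_injective _ (add_left_injective _),
    card_erase_of_mem (zero_mem_subsetSumsN _ _), card_sdiff_of_subset hsub] at hnew
  have hle := card_le_card hsub
  have hpos := card_pos.2 ⟨0, zero_mem_subsetSumsN X1 (∑ x ∈ X1, x)⟩
  omega

/-- If `X = X1 ∪ X2 ∪ {xn}` is a partition with `xn = max(X)` and `Σ(X1) ≤ Σ(X2)`, then
`|S(X1, Σ(X1))| ≤ (|S(X, Σ(X))| + 1) / 2`. -/
theorem subset_sums_halving (X X1 X2 : Finset ℕ) (xn : ℕ)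
    (hpos : ∀ x ∈ X, 0 < x)
    (hX : X = X1 ∪ X2 ∪ {xn}) (h12 : Disjoint X1 X2) (h1n : xn ∉ X1) (h2n : xn ∉ X2)
    (hmax : ∀ x ∈ X, x ≤ xn)
    (hsum : ∑ x ∈ X1, x ≤ ∑ x ∈ X2, x) :
    2 * (subsetSumsN X1 (∑ x ∈ X1, x)).card ≤ (subsetSumsN X (∑ x ∈ X, x)).card + 1 :=
  subset_sums_halving_general X X1 X2 xn hX h12 hsum
end

section
/- Fix 0 ≤ δ < 1/2 and even t ≥ 2, m ≥ 2. Suppose I^(1),...,I^(g) ⊆ {0,...,t-1} each have size t/2 and pairwise symmetric difference at least δt. Define X^(ℓ) = S(I^(ℓ)) and Y^(ℓ) = S({0,...,t-1} \ I^(ℓ)), where S(I) is the set of integers with m-ary digits (in [0,m-1]) supported on I. Then: (1) |X^(ℓ)| = |Y^(ℓ)| = m^{t/2}; (2) |X^(ℓ) + Y^(ℓ)| = m^t; (3) for ℓ ≠ h, |X^(ℓ) + Y^(h)| ≤ 2^{δt/2} · m^{(1−δ/2)t}. -/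
/-! The base-`m` expansion is unique, so `η ↦ Σ η_i m^i` is injective on digit vectors: this
gives `|S(I)| = m^|I|` and `S(I) + S(J) = S(I ∪ J)` for disjoint `I`, `J`. For arbitrary `I`, `J`,
with `K = I ∩ J` we get `S(I) + S(J) = S(I △ J) + (S(K) + S(K))`, and `S(K) + S(K)` consists of
digit sums with digits below `2m - 1`; hence `|S(I) + S(J)| ≤ 2^|I ∩ J| · m^|I ∪ J|`. For
`I = I^(ℓ)` and `J` the complement of `I^(h)` this is `2^a m^(t-a)` with
`a = |I^(ℓ) \ I^(h)| = |I^(ℓ) △ I^(h)| / 2 ≥ δt/2`, and `2^a m^(t-a)` decreases in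
`a` as `m ≥ 2`. -/

open Pointwise

/-- `digitSet m I` is the set of natural numbers of the form `Σ_{i ∈ I} η_i · m^i`
with digits `0 ≤ η_i < m`. -/
def digitSet (m : ℕ) (I : Finset ℕ) : Finset ℕ :=
  (I.pi fun _ => Finset.range m).image fun η => ∑ i ∈ I.attach, η i.1 i.2 * m ^ (i.1 : ℕ)

open Finset

theorem card_symmDiff_of_card_eq {α : Type*} [DecidableEq α] {I J : Finset α} (h : #I = #J) :
    #(symmDiff I J) = 2 * #(I \ J) := by
  rw [symmDiff_def, sup_eq_union, card_union_of_disjoint disjoint_sdiff_sdiff,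
    ← card_sdiff_comm h, two_mul]

theorem rpow_mul_rpow_sub_le_of_le {c m r a : ℝ} (hc : 0 < c) (hcm : c ≤ m) (hra : r ≤ a)
    (t : ℝ) : c ^ a * m ^ (t - a) ≤ c ^ r * m ^ (t - r) := by
  have hm : 0 < m := hc.trans_le hcm
  calc c ^ a * m ^ (t - a) = c ^ r * (c ^ (a - r) * m ^ (t - a)) := by
        rw [← mul_assoc, ← Real.rpow_add hc, add_sub_cancel]
    _ ≤ c ^ r * (m ^ (a - r) * m ^ (t - a)) := by
        gcongr
    _ = c ^ r * m ^ (t - r) := by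
        rw [← Real.rpow_add hm, sub_add_sub_cancel']

theorem sum_attach_eq_sum_dite (b : ℕ) (I : Finset ℕ) (η : ∀ i ∈ I, ℕ) :
    ∑ i ∈ I.attach, η i.1 i.2 * b ^ (i.1 : ℕ) =
      ∑ i ∈ I, (if h : i ∈ I then η i h else 0) * b ^ i := by
  rw [← sum_attach I]
  exact sum_congr rfl fun i _ => by rw [dif_pos i.2]

/-- Sums `Σ_{i ∈ I} η_i b^i` with digits `η_i < d`; `digitSet m` is `digitSums m m` by `rfl`.
-/
def digitSums (b d : ℕ) (I : Finset ℕ) : Finset ℕ :=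
  (I.pi fun _ => range d).image fun η => ∑ i ∈ I.attach, η i.1 i.2 * b ^ (i.1 : ℕ)

theorem mem_digitSums {b d : ℕ} {I : Finset ℕ} {x : ℕ} :
    x ∈ digitSums b d I ↔
      ∃ η : ℕ → ℕ, (∀ i ∈ I, η i < d) ∧ ∑ i ∈ I, η i * b ^ i = x := by
  constructor
  · intro hx
    obtain ⟨η, hη, rfl⟩ := mem_image.1 hx
    refine ⟨fun i => if h : i ∈ I then η i h else 0, fun i hi => ?_,
      (sum_attach_eq_sum_dite b I η).symm⟩
    simpa [hi] using mem_pi.1 hη i hi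
  · rintro ⟨η, hη, rfl⟩
    exact mem_image.2 ⟨fun i _ => η i, mem_pi.2 fun i hi => mem_range.2 (hη i hi),
      sum_attach I fun i => η i * b ^ i⟩

theorem card_digitSums_le (b d : ℕ) (I : Finset ℕ) : #(digitSums b d I) ≤ d ^ #I :=
  card_image_le.trans_eq (by simp [card_pi, prod_const])

theorem digitSums_add_digitSums_subset (b d e : ℕ) (I : Finset ℕ) :
    digitSums b d I + digitSums b e I ⊆ digitSums b (d + e - 1) I := by
  intro x hx
  obtain ⟨y, hy, z, hz, rfl⟩ := mem_add.1 hx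
  obtain ⟨η, hη, rfl⟩ := mem_digitSums.1 hy
  obtain ⟨ζ, hζ, rfl⟩ := mem_digitSums.1 hz
  refine mem_digitSums.2 ⟨η + ζ, fun i hi => ?_, ?_⟩
  · have := hη i hi; have := hζ i hi; simp only [Pi.add_apply]; omega
  · simp only [Pi.add_apply, add_mul, sum_add_distrib]

theorem digitSums_union {I J : Finset ℕ} (h : Disjoint I J) (b d : ℕ) :
    digitSums b d (I ∪ J) = digitSums b d I + digitSums b d J := by
  ext x
  simp only [mem_add, mem_digitSums]
  constructor
  · rintro ⟨θ, hθ, rfl⟩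
    exact ⟨_, ⟨θ, fun i hi => hθ i (mem_union_left J hi), rfl⟩,
      _, ⟨θ, fun i hi => hθ i (mem_union_right I hi), rfl⟩, (sum_union h).symm⟩
  · rintro ⟨_, ⟨η, hη, rfl⟩, _, ⟨ζ, hζ, rfl⟩, rfl⟩
    refine ⟨fun i => if i ∈ I then η i else ζ i, fun i hi => ?_, ?_⟩
    · by_cases hI : i ∈ I
      · simpa [hI] using hη i hI
      · simpa [hI] using hζ i ((mem_union.1 hi).resolve_left hI)
    · rw [sum_union h]
      congr 1
      · exact sum_congr rfl fun i hi => by simp [hi]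
      · exact sum_congr rfl fun i hi => by simp [disjoint_right.1 h hi]

theorem sum_digits_div_pow_mod {b : ℕ} {I : Finset ℕ} {η : ℕ → ℕ}
    (hη : ∀ i ∈ I, η i < b) {k : ℕ} (hk : k ∈ I) :
    (∑ i ∈ I, η i * b ^ i) / b ^ k % b = η k := by
  -- extended by zero, `η` is a map `Fin n → Fin b`, whose digits `finFunctionFinEquiv` reads off
  obtain ⟨n, hn⟩ := I.exists_nat_subset_range
  have hb : 0 < b := (Nat.zero_le _).trans_lt (hη k hk)
  let f : Fin n → Fin b := fun i =>
    ⟨if (i : ℕ) ∈ I then η i else 0, by split_ifs with h; exacts [hη _ h, hb]⟩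
  have hsum : ∑ i ∈ I, η i * b ^ i = finFunctionFinEquiv f := by
    rw [finFunctionFinEquiv_apply,
      Fin.sum_univ_eq_sum_range (fun i => (if i ∈ I then η i else 0) * b ^ i) n,
      ← sum_subset hn fun i _ hi => by simp [hi]]
    exact sum_congr rfl fun i hi => by simp [hi]
  have hdigit :=
    finFunctionFinEquiv_symm_apply_val (finFunctionFinEquiv f) ⟨k, mem_range.1 (hn hk)⟩
  rw [Equiv.symm_apply_apply] at hdigit
  rw [hsum, ← hdigit]
  simp [f, hk]

theorem card_digitSet (m : ℕ) (I : Finset ℕ) : #(digitSet m I) = m ^ #I := by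
  rw [digitSet, card_image_of_injOn, card_pi, prod_const, card_range]
  intro η₁ hη₁ η₂ hη₂ heq
  simp only [sum_attach_eq_sum_dite] at heq
  funext i hi
  have hlt : ∀ η ∈ I.pi fun _ => range m, ∀ j ∈ I,
      (if h : j ∈ I then η j h else 0) < m := fun η hη j hj => by
    simpa [hj] using mem_pi.1 hη j hj
  have h₁ := sum_digits_div_pow_mod (hlt η₁ (mem_coe.1 hη₁)) hi
  have h₂ := sum_digits_div_pow_mod (hlt η₂ (mem_coe.1 hη₂)) hi
  rw [heq, h₂] at h₁
  simpa [hi] using h₁.symm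

theorem digitSet_union {I J : Finset ℕ} (h : Disjoint I J) (m : ℕ) :
    digitSet m (I ∪ J) = digitSet m I + digitSet m J :=
  digitSums_union h m m

theorem card_digitSet_add_digitSet_le (m : ℕ) (I J : Finset ℕ) :
    #(digitSet m I + digitSet m J) ≤ 2 ^ #(I ∩ J) * m ^ #(I ∪ J) := by
  have hI : digitSet m I = digitSet m (I \ J) + digitSet m (I ∩ J) := by
    rw [← digitSet_union (disjoint_sdiff_inter I J), sdiff_union_inter]
  have hJ : digitSet m J = digitSet m (J \ I) + digitSet m (I ∩ J) := by
    rw [inter_comm, ← digitSet_union (disjoint_sdiff_inter J I), sdiff_union_inter]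
  have hsplit : digitSet m I + digitSet m J =
      digitSet m (symmDiff I J) + (digitSet m (I ∩ J) + digitSet m (I ∩ J)) := by
    rw [hI, hJ, add_add_add_comm, ← digitSet_union disjoint_sdiff_sdiff, symmDiff_def,
      sup_eq_union]
  have hunion : symmDiff I J ∪ (I ∩ J) = I ∪ J := symmDiff_sup_inf I J
  have hdisj : Disjoint (symmDiff I J) (I ∩ J) := disjoint_symmDiff_inf I J
  calc #(digitSet m I + digitSet m J)
      ≤ #(digitSet m (symmDiff I J)) * #(digitSet m (I ∩ J) + digitSet m (I ∩ J)) :=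
        hsplit ▸ card_add_le
    _ ≤ m ^ #(symmDiff I J) * (2 * m) ^ #(I ∩ J) := by
      gcongr
      · exact (card_digitSet m _).le
      · exact (card_le_card (digitSums_add_digitSums_subset m m m _)).trans
          ((card_digitSums_le m _ _).trans (Nat.pow_le_pow_left (by omega) _))
    _ = 2 ^ #(I ∩ J) * m ^ #(I ∪ J) := by
      rw [← hunion, card_union_of_disjoint hdisj, mul_pow, pow_add]
      ring

theorem card_digitSet_add_digitSet_sdiff_le (m : ℕ) {U I J : Finset ℕ} (hI : I ⊆ U)
    (hJ : J ⊆ U) (h : #I = #J) :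
    #(digitSet m I + digitSet m (U \ J)) ≤ 2 ^ #(I \ J) * m ^ (#U - #(I \ J)) := by
  have hinter : I ∩ (U \ J) = I \ J := by
    ext x
    simp only [mem_inter, mem_sdiff]
    exact ⟨fun hx => ⟨hx.1, hx.2.2⟩, fun hx => ⟨hx.1, hI hx.1, hx.2⟩⟩
  have hunion : I ∪ (U \ J) = U \ (J \ I) := by
    ext x
    simp only [mem_union, mem_sdiff]
    have := @hI x
    tauto
  have hcard : #(I ∪ (U \ J)) = #U - #(I \ J) := by
    rw [hunion, card_sdiff_of_subset (sdiff_subset.trans hJ), card_sdiff_comm h]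
  simpa only [hinter, hcard] using card_digitSet_add_digitSet_le m I (U \ J)

theorem card_digitSet_add_digitSet_sdiff_le_rpow {m : ℕ} (hm : 2 ≤ m) {U I J : Finset ℕ}
    (hI : I ⊆ U) (hJ : J ⊆ U) (h : #I = #J) {δ : ℝ} (hδ : δ * #U ≤ #(symmDiff I J)) :
    (#(digitSet m I + digitSet m (U \ J)) : ℝ) ≤
      (2 : ℝ) ^ (δ * #U / 2) * (m : ℝ) ^ ((1 - δ / 2) * #U) := by
  set a := #(I \ J)
  have hδa : δ * #U / 2 ≤ a := by
    rw [card_symmDiff_of_card_eq h] at hδ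
    push_cast at hδ
    linarith
  have haU : a ≤ #U := card_le_card (sdiff_subset.trans hI)
  calc (#(digitSet m I + digitSet m (U \ J)) : ℝ)
      ≤ (2 ^ a * m ^ (#U - a) : ℕ) := mod_cast card_digitSet_add_digitSet_sdiff_le m hI hJ h
    _ = (2 : ℝ) ^ (a : ℝ) * (m : ℝ) ^ ((#U : ℝ) - a) := by
        rw [← Nat.cast_sub haU, Real.rpow_natCast, Real.rpow_natCast]
        push_cast
        rfl
    _ ≤ (2 : ℝ) ^ (δ * #U / 2) * (m : ℝ) ^ ((#U : ℝ) - δ * #U / 2) :=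
        rpow_mul_rpow_sub_le_of_le two_pos (mod_cast hm) hδa _
    _ = (2 : ℝ) ^ (δ * #U / 2) * (m : ℝ) ^ ((1 - δ / 2) * #U) := by ring_nf

theorem digit_code_sumsets_general (δ : ℝ)
    (m t : ℕ) (hm : 2 ≤ m) (hte : Even t)
    (g : ℕ) (I : Fin g → Finset ℕ)
    (hsub : ∀ ℓ, I ℓ ⊆ Finset.range t)
    (hcard : ∀ ℓ, (I ℓ).card = t / 2)
    (hdist : ∀ ℓ h : Fin g, ℓ ≠ h → δ * t ≤ ((symmDiff (I ℓ) (I h)).card : ℝ)) :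
    (∀ ℓ, (digitSet m (I ℓ)).card = m ^ (t / 2) ∧
      (digitSet m (Finset.range t \ I ℓ)).card = m ^ (t / 2)) ∧
    (∀ ℓ, (digitSet m (I ℓ) + digitSet m (Finset.range t \ I ℓ)).card = m ^ t) ∧
    (∀ ℓ h : Fin g, ℓ ≠ h →
      ((digitSet m (I ℓ) + digitSet m (Finset.range t \ I h)).card : ℝ) ≤
        (2 : ℝ) ^ (δ * t / 2) * (m : ℝ) ^ ((1 - δ / 2) * t)) := by
  refine ⟨fun ℓ => ⟨?_, ?_⟩, fun ℓ => ?_, fun ℓ h hne => ?_⟩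
  · rw [card_digitSet, hcard]
  · rw [card_digitSet, card_sdiff_of_subset (hsub ℓ), card_range, hcard]
    obtain ⟨k, rfl⟩ := hte
    congr 1
    omega
  · rw [← digitSet_union disjoint_sdiff, union_sdiff_of_subset (hsub ℓ), card_digitSet,
      card_range]
  · simpa only [card_range] using
      card_digitSet_add_digitSet_sdiff_le_rpow hm (hsub ℓ) (hsub h)
        ((hcard ℓ).trans (hcard h).symm) (by simpa only [card_range] using hdist ℓ h hne)

/-- Lovett's construction: with `I^(ℓ)` of size `t/2` and pairwise symmetric difference
at least `δt`, the sets `X^(ℓ) = S(I^(ℓ))` and `Y^(ℓ) = S(I^(ℓ)ᶜ)` satisfy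
(1) `|X^(ℓ)| = |Y^(ℓ)| = m^{t/2}`, (2) `|X^(ℓ) + Y^(ℓ)| = m^t`, and
(3) for `ℓ ≠ h`, `|X^(ℓ) + Y^(h)| ≤ 2^{δt/2} · m^{(1−δ/2)t}`. -/
theorem digit_code_sumsets (δ : ℝ) (hδ0 : 0 ≤ δ) (hδ : δ < 1 / 2)
    (m t : ℕ) (hm : 2 ≤ m) (ht : 2 ≤ t) (hte : Even t)
    (g : ℕ) (I : Fin g → Finset ℕ)
    (hsub : ∀ ℓ, I ℓ ⊆ Finset.range t)
    (hcard : ∀ ℓ, (I ℓ).card = t / 2)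
    (hdist : ∀ ℓ h : Fin g, ℓ ≠ h → δ * t ≤ ((symmDiff (I ℓ) (I h)).card : ℝ)) :
    (∀ ℓ, (digitSet m (I ℓ)).card = m ^ (t / 2) ∧
      (digitSet m (Finset.range t \ I ℓ)).card = m ^ (t / 2)) ∧
    (∀ ℓ, (digitSet m (I ℓ) + digitSet m (Finset.range t \ I ℓ)).card = m ^ t) ∧
    (∀ ℓ h : Fin g, ℓ ≠ h →
      ((digitSet m (I ℓ) + digitSet m (Finset.range t \ I h)).card : ℝ) ≤
        (2 : ℝ) ^ (δ * t / 2) * (m : ℝ) ^ ((1 - δ / 2) * t)) :=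
  digit_code_sumsets_general δ m t hm hte g I hsub hcard hdist
end
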